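/- The map κ(r,y) = P(y + u + (−(1/2)f(y,y) + ri)x) is a bijection from R × M_u onto Q̃ \ a^⊥, where a = P(x). In particular, every class b ∈ Q̃ with b not orthogonal to a has a unique representative z with f(z,x) = 1, and z = y + u + βx with y ∈ M_u, Re β = −(1/2)f(y,y). -/

import Mathlib

open Complex Finset ComplexConjugate

/- An isotropic `z` with `f(z,x) ≠ 0` has exactly one multiple `w` with `f(w,x) = 1`.
Putting `β = f(w,u)` and `y = w - u - β x`, one gets `y ∈ M_u` and `w = y + u + β x`; expanding
`f(w,w) = 0` gives `f(y,y) + 2 Re β = 0`, so `w = κ₀(Im β, y)`. Conversely `κ₀(r,y)` pairs with `x`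
to `1` and with `u` to `-(1/2) f(y,y) + r i`, which recovers the scalar, then `r`, then `y`. -/

noncomputable def hform (p q : ℕ) (u v : Fin (p + q) → ℂ) : ℂ :=
  ∑ j : Fin (p + q), (if (j : ℕ) < p then (1 : ℂ) else -1) * u j * conj (v j)

noncomputable def kappa0 (p q : ℕ) (x u : Fin (p + q) → ℂ) (r : ℝ)
    (y : Fin (p + q) → ℂ) : Fin (p + q) → ℂ :=
  y + u + (-(1 / 2) * hform p q y y + r * Complex.I) • x

section Sesquilinear

variable {p q : ℕ}

lemma hform_add_left (a b v : Fin (p + q) → ℂ) :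
    hform p q (a + b) v = hform p q a v + hform p q b v := by
  unfold hform
  rw [← Finset.sum_add_distrib]
  refine Finset.sum_congr rfl fun j _ => ?_
  simp only [Pi.add_apply]
  ring

lemma hform_smul_left (c : ℂ) (a v : Fin (p + q) → ℂ) :
    hform p q (c • a) v = c * hform p q a v := by
  unfold hform
  rw [Finset.mul_sum]
  refine Finset.sum_congr rfl fun j _ => ?_
  simp only [Pi.smul_apply, smul_eq_mul]
  ring

lemma hform_sub_left (a b v : Fin (p + q) → ℂ) :
    hform p q (a - b) v = hform p q a v - hform p q b v := by
  rw [sub_eq_add_neg, ← neg_one_smul ℂ b, hform_add_left, hform_smul_left]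
  ring

lemma conj_hform (a b : Fin (p + q) → ℂ) : conj (hform p q a b) = hform p q b a := by
  unfold hform
  rw [map_sum]
  refine Finset.sum_congr rfl fun j _ => ?_
  simp only [map_mul, apply_ite (conj : ℂ → ℂ), map_one, map_neg, Complex.conj_conj]
  ring

lemma hform_eq_zero_comm {a b : Fin (p + q) → ℂ} (h : hform p q a b = 0) :
    hform p q b a = 0 := by
  rw [← conj_hform, h, map_zero]

lemma hform_eq_one_comm {a b : Fin (p + q) → ℂ} (h : hform p q a b = 1) :
    hform p q b a = 1 := by
  rw [← conj_hform, h, map_one]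

lemma hform_add_right (a b v : Fin (p + q) → ℂ) :
    hform p q v (a + b) = hform p q v a + hform p q v b := by
  rw [← conj_hform, hform_add_left, map_add, conj_hform, conj_hform]

lemma hform_smul_right (c : ℂ) (a v : Fin (p + q) → ℂ) :
    hform p q v (c • a) = conj c * hform p q v a := by
  rw [← conj_hform, hform_smul_left, map_mul, conj_hform]

lemma hform_inv_smul_left_self {z x : Fin (p + q) → ℂ} (h : hform p q z x ≠ 0) :
    hform p q ((hform p q z x)⁻¹ • z) x = 1 := by
  rw [hform_smul_left, inv_mul_cancel₀ h]

lemma eq_inv_hform_of_hform_smul_left_eq_one {c : ℂ} {z x : Fin (p + q) → ℂ}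
    (h : hform p q (c • z) x = 1) : c = (hform p q z x)⁻¹ :=
  eq_inv_of_mul_eq_one_left (hform_smul_left c z x ▸ h)

end Sesquilinear

section Kappa

variable {p q : ℕ} {x u : Fin (p + q) → ℂ}

lemma hform_kappa0_x (hxQ : hform p q x x = 0) (hux : hform p q u x = 1) (r : ℝ)
    {y : Fin (p + q) → ℂ} (hyx : hform p q y x = 0) :
    hform p q (kappa0 p q x u r y) x = 1 := by
  simp only [kappa0, hform_add_left, hform_smul_left, hyx, hux, hxQ]
  ring

lemma hform_kappa0_u (huQ : hform p q u u = 0) (hux : hform p q u x = 1) (r : ℝ)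
    {y : Fin (p + q) → ℂ} (hyu : hform p q y u = 0) :
    hform p q (kappa0 p q x u r y) u = -(1 / 2) * hform p q y y + r * Complex.I := by
  simp only [kappa0, hform_add_left, hform_smul_left, hyu, huQ, hform_eq_one_comm hux]
  ring

lemma kappa0_injective (huQ : hform p q u u = 0) (hux : hform p q u x = 1) {r r' : ℝ}
    {y y' : Fin (p + q) → ℂ} (hyu : hform p q y u = 0) (hy'u : hform p q y' u = 0)
    (h : kappa0 p q x u r' y' = kappa0 p q x u r y) : r = r' ∧ y = y' := by
  have hβ := congrArg (fun v => hform p q v u) h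
  simp only [hform_kappa0_u huQ hux _ hyu, hform_kappa0_u huQ hux _ hy'u] at hβ
  have hy : y' = y := by
    unfold kappa0 at h
    rw [hβ] at h
    exact add_right_cancel (add_right_cancel h)
  subst hy
  have hr : (r : ℂ) * Complex.I = r' * Complex.I := by linear_combination -hβ
  exact ⟨mod_cast (mul_right_cancel₀ Complex.I_ne_zero hr : (r : ℂ) = r'), rfl⟩

lemma kappa0_eq_of_eq_smul (hxQ : hform p q x x = 0) (hux : hform p q u x = 1)
    {r r' : ℝ} {y y' : Fin (p + q) → ℂ} (hyx : hform p q y x = 0)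
    (hy'x : hform p q y' x = 0) {c : ℂ}
    (h : kappa0 p q x u r' y' = c • kappa0 p q x u r y) :
    kappa0 p q x u r' y' = kappa0 p q x u r y := by
  have hc := congrArg (fun v => hform p q v x) h
  simp only [hform_smul_left, hform_kappa0_x hxQ hux _ hyx, hform_kappa0_x hxQ hux _ hy'x] at hc
  rwa [← mul_one c, ← hc, one_smul] at h

/-- The `M_u`-component of a vector `w`. -/
noncomputable def muPart (p q : ℕ) (x u w : Fin (p + q) → ℂ) : Fin (p + q) → ℂ :=
  w - u - hform p q w u • x

lemma hform_muPart_x (hxQ : hform p q x x = 0) (hux : hform p q u x = 1)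
    {w : Fin (p + q) → ℂ} (hwx : hform p q w x = 1) :
    hform p q (muPart p q x u w) x = 0 := by
  simp only [muPart, hform_sub_left, hform_smul_left, hwx, hux, hxQ]
  ring

lemma hform_muPart_u (huQ : hform p q u u = 0) (hux : hform p q u x = 1)
    (w : Fin (p + q) → ℂ) : hform p q (muPart p q x u w) u = 0 := by
  simp only [muPart, hform_sub_left, hform_smul_left, huQ, hform_eq_one_comm hux]
  ring

lemma kappa0_muPart (hxQ : hform p q x x = 0) (huQ : hform p q u u = 0)
    (hux : hform p q u x = 1) {w : Fin (p + q) → ℂ} (hwx : hform p q w x = 1)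
    (hww : hform p q w w = 0) :
    kappa0 p q x u (hform p q w u).im (muPart p q x u w) = w := by
  set β := hform p q w u
  set y := muPart p q x u w
  have hyx : hform p q y x = 0 := hform_muPart_x hxQ hux hwx
  have hyu : hform p q y u = 0 := hform_muPart_u huQ hux w
  have hw : w = y + u + β • x := by simp only [y, β, muPart]; abel
  have hyy : hform p q y y = -(β + conj β) := by
    rw [hw] at hww
    simp only [hform_add_left, hform_add_right, hform_smul_left, hform_smul_right, hyx, hyu,
      hform_eq_zero_comm hyx, hform_eq_zero_comm hyu, hxQ, huQ, hux, hform_eq_one_comm hux] at hww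
    linear_combination hww
  have hβ : -(1 / 2) * hform p q y y + β.im * Complex.I = β := by
    rw [hyy, Complex.add_conj]
    push_cast
    linear_combination Complex.re_add_im β
  rw [kappa0, hβ, ← hw]

end Kappa

theorem kappa_bijective_general (p q : ℕ)
    (x u : Fin (p + q) → ℂ) (hxQ : hform p q x x = 0)
    (huQ : hform p q u u = 0) (hux : hform p q u x = 1) :
    (∀ (r r' : ℝ) (y y' : Fin (p + q) → ℂ),
      hform p q y x = 0 → hform p q y u = 0 →
      hform p q y' x = 0 → hform p q y' u = 0 →
      (∃ c : ℂ, c ≠ 0 ∧ kappa0 p q x u r' y' = c • kappa0 p q x u r y) →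
      r = r' ∧ y = y') ∧
    (∀ z : Fin (p + q) → ℂ, z ≠ 0 → hform p q z z = 0 → hform p q z x ≠ 0 →
      ∃ (r : ℝ) (y : Fin (p + q) → ℂ), hform p q y x = 0 ∧ hform p q y u = 0 ∧
        ∃ c : ℂ, c ≠ 0 ∧ z = c • kappa0 p q x u r y) ∧
    (∀ z : Fin (p + q) → ℂ, z ≠ 0 → hform p q z z = 0 → hform p q z x ≠ 0 →
      ∃! w : Fin (p + q) → ℂ,
        (∃ c : ℂ, c ≠ 0 ∧ w = c • z) ∧ hform p q w x = 1) := by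
  refine ⟨?_, ?_, ?_⟩
  · rintro r r' y y' hyx hyu hy'x hy'u ⟨c, -, h⟩
    exact kappa0_injective huQ hux hyu hy'u
      (kappa0_eq_of_eq_smul hxQ hux hyx hy'x h)
  · intro z _ hzz hzx
    set α := hform p q z x
    set w := α⁻¹ • z
    have hwx : hform p q w x = 1 := hform_inv_smul_left_self hzx
    have hww : hform p q w w = 0 := by
      simp only [w, hform_smul_left, hform_smul_right, hzz, mul_zero]
    refine ⟨(hform p q w u).im, muPart p q x u w, hform_muPart_x hxQ hux hwx,
      hform_muPart_u huQ hux w, α, hzx, ?_⟩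
    rw [kappa0_muPart hxQ huQ hux hwx hww, smul_inv_smul₀ hzx]
  · intro z _ _ hzx
    refine ⟨_, ⟨⟨_, inv_ne_zero hzx, rfl⟩, hform_inv_smul_left_self hzx⟩, ?_⟩
    rintro w ⟨⟨c, -, rfl⟩, hw⟩
    rw [eq_inv_hform_of_hform_smul_left_eq_one hw]

/-- `κ = P ∘ κ₀` is a bijection from `ℝ × M_u` onto `Q̃ \ a^⊥` (`a = P(x)`):
it is injective on `ℝ × M_u`; every isotropic `z` with `f(z,x) ≠ 0` lies, up to a
nonzero scalar, in the image of `κ₀`; and every class not orthogonal to `a` has a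
unique representative `z` with `f(z,x) = 1`. -/
theorem kappa_bijective (p q : ℕ) (hp : 1 ≤ p) (hq : 1 ≤ q)
    (x u : Fin (p + q) → ℂ) (hx : x ≠ 0) (hxQ : hform p q x x = 0)
    (hu : u ≠ 0) (huQ : hform p q u u = 0) (hux : hform p q u x = 1) :
    (∀ (r r' : ℝ) (y y' : Fin (p + q) → ℂ),
      hform p q y x = 0 → hform p q y u = 0 →
      hform p q y' x = 0 → hform p q y' u = 0 →
      (∃ c : ℂ, c ≠ 0 ∧ kappa0 p q x u r' y' = c • kappa0 p q x u r y) →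
      r = r' ∧ y = y') ∧
    (∀ z : Fin (p + q) → ℂ, z ≠ 0 → hform p q z z = 0 → hform p q z x ≠ 0 →
      ∃ (r : ℝ) (y : Fin (p + q) → ℂ), hform p q y x = 0 ∧ hform p q y u = 0 ∧
        ∃ c : ℂ, c ≠ 0 ∧ z = c • kappa0 p q x u r y) ∧
    (∀ z : Fin (p + q) → ℂ, z ≠ 0 → hform p q z z = 0 → hform p q z x ≠ 0 →
      ∃! w : Fin (p + q) → ℂ,
        (∃ c : ℂ, c ≠ 0 ∧ w = c • z) ∧ hform p q w x = 1) :=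
  kappa_bijective_general p q x u hxQ huQ hux
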